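/- The functions of Φ are linearly independent (as functions on Ω); hence Φ is a basis of the C¹ isogeometric space W := span Φ. -/

import Mathlib

/-!
Pull a vanishing combination `∑ c_e φ_e` back to the left patch. Every function of `Φ` pulls back
to `∑ᵢ wᵢ(ξ₂) N_i^{p,r}(ξ₁)`, so by linear independence of the B-splines in `ξ₁` each coefficient
`wᵢ` vanishes on `(0,1)`. For `i ≥ 2`, `wᵢ` is a combination of `N_j^{p,r}(ξ₂)` with the
coefficients `c` of the left interior functions; for `i = 0` it is a combination of
`N_j^{p,r+1}(ξ₂)` with the coefficients of `φ_{Γ₀,j}`; for `i = 1`, once those vanish, it is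
`α^(L)(ξ₂)` times a combination of `N_j^{p-1,r}(ξ₂)` with the coefficients of `φ_{Γ₁,j}`, and
`α^(L)` has no zero. The same argument on the right patch, away from the interface, kills the
right interior coefficients. Linear independence of B-splines comes from Marsden's identity: on a
nonempty knot span the `p + 1` active B-splines span all polynomials of degree `p`.
-/

noncomputable section
open Set

namespace TwoPatch



/-- Cox–de Boor recursion for B-splines over the knot sequence `t`.  Degree-`0`
B-splines are the characteristic functions of `[t i, t (i+1))`, closed at the
right endpoint when `t (i+1) = 1` (the right end of the parametric domain),
and the usual convention `0/0 = 0` is used in the recursion. -/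
def coxDeBoor (t : ℕ → ℝ) : ℕ → ℕ → ℝ → ℝ
  | 0, i, x =>
      if (t i ≤ x ∧ x < t (i + 1)) ∨ (t i < t (i + 1) ∧ t (i + 1) = 1 ∧ x = 1) then 1 else 0
  | (d + 1), i, x =>
      (if t (i + d + 1) = t i then 0 else (x - t i) / (t (i + d + 1) - t i)) *
          coxDeBoor t d i x +
        (if t (i + d + 2) = t (i + 1) then 0
          else (t (i + d + 2) - x) / (t (i + d + 2) - t (i + 1))) *
          coxDeBoor t d (i + 1) x

/-- The open knot vector on `[0,1]` of degree `dg`:  `0` and `1` appear with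
multiplicity `dg + 1` and each of the `k` inner breakpoints `τ 0 < … < τ (k-1)`
appears with multiplicity `m`. -/
def openKnots (dg m k : ℕ) (τ : ℕ → ℝ) (j : ℕ) : ℝ :=
  if j ≤ dg then 0 else if dg + k * m < j then 1 else τ ((j - (dg + 1)) / m)

/-- The `i`-th B-spline of degree `dg`, inner-knot multiplicity `m`, over the
breakpoints `τ 0, …, τ (k-1)`. -/
def Bspl (dg m k : ℕ) (τ : ℕ → ℝ) (i : ℕ) : ℝ → ℝ :=
  coxDeBoor (openKnots dg m k τ) dg i

/-- The dimension of the corresponding spline space. -/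
def sdim (dg m k : ℕ) : ℕ := dg + 1 + k * m

/-- The univariate spline space, as a subspace of `ℝ → ℝ`. -/
def splineSpace (dg m k : ℕ) (τ : ℕ → ℝ) : Submodule ℝ (ℝ → ℝ) :=
  Submodule.span ℝ (Bspl dg m k τ '' Set.Iio (sdim dg m k))

/-- The tensor-product spline space `span {g(ξ₁)h(ξ₂) : g, h ∈ S}`. -/
def tensorSpace (dg m k : ℕ) (τ : ℕ → ℝ) : Submodule ℝ (ℝ × ℝ → ℝ) :=
  Submodule.span ℝ
    {f | ∃ g ∈ splineSpace dg m k τ, ∃ h ∈ splineSpace dg m k τ,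
        f = fun q : ℝ × ℝ => g q.1 * h q.2}

/-- The parametric interval `[0,1]`. -/
def I01 : Set ℝ := Set.Icc 0 1

/-- The parametric square `[0,1]²`. -/
def sq : Set (ℝ × ℝ) := Set.Icc (0, 0) (1, 1)

/-- Derivative of a univariate function within `[0,1]` (one-sided at the endpoints). -/
def d01 (g : ℝ → ℝ) (x : ℝ) : ℝ := derivWithin g I01 x

/-- First partial derivative (within `[0,1]` in the first variable). -/
def pd1 (f : ℝ × ℝ → ℝ) (q : ℝ × ℝ) : ℝ := derivWithin (fun s => f (s, q.2)) I01 q.1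

/-- Second partial derivative (within `[0,1]` in the second variable). -/
def pd2 (f : ℝ × ℝ → ℝ) (q : ℝ × ℝ) : ℝ := derivWithin (fun s => f (q.1, s)) I01 q.2

/-- First partial derivative of a map into `ℝ²`. -/
def pd1v (F : ℝ × ℝ → ℝ × ℝ) (q : ℝ × ℝ) : ℝ × ℝ :=
  (pd1 (fun x => (F x).1) q, pd1 (fun x => (F x).2) q)

/-- Second partial derivative of a map into `ℝ²`. -/
def pd2v (F : ℝ × ℝ → ℝ × ℝ) (q : ℝ × ℝ) : ℝ × ℝ :=
  (pd2 (fun x => (F x).1) q, pd2 (fun x => (F x).2) q)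

/-- Jacobian determinant. -/
def jacDet (F : ℝ × ℝ → ℝ × ℝ) (q : ℝ × ℝ) : ℝ :=
  pd1 (fun x => (F x).1) q * pd2 (fun x => (F x).2) q -
    pd1 (fun x => (F x).2) q * pd2 (fun x => (F x).1) q

/-- The Jacobian matrix. -/
def jacMat (F : ℝ × ℝ → ℝ × ℝ) (q : ℝ × ℝ) : Matrix (Fin 2) (Fin 2) ℝ :=
  !![pd1 (fun x => (F x).1) q, pd2 (fun x => (F x).1) q;
     pd1 (fun x => (F x).2) q, pd2 (fun x => (F x).2) q]

/-- Polynomials of degree at most one ("linear functions"). -/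
def IsLinearPoly (a : ℝ → ℝ) : Prop := ∃ c₀ c₁ : ℝ, a = fun x => c₀ + c₁ * x

/-- Breakpoints extended by the endpoints `0` and `1`. -/
def extBpt (k : ℕ) (τ : ℕ → ℝ) (i : ℕ) : ℝ :=
  if i = 0 then 0 else if i ≤ k then τ (i - 1) else 1

/-- One dyadic refinement of the breakpoint set `τ 0 < … < τ (k-1)`:
the old breakpoints together with the midpoints of the `k+1` intervals
determined by `{0} ∪ T ∪ {1}`. -/
def dyadicOnce (k : ℕ) (τ : ℕ → ℝ) (j : ℕ) : ℝ :=
  if j % 2 = 1 then τ (j / 2) else (extBpt k τ (j / 2) + extBpt k τ (j / 2 + 1)) / 2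

/-- Number of breakpoints at level `ℓ`. -/
def levelK (k : ℕ) : ℕ → ℕ
  | 0 => k
  | ℓ + 1 => 2 * levelK k ℓ + 1

/-- Breakpoints at level `ℓ` (iterated dyadic refinement). -/
def levelτ (k : ℕ) (τ : ℕ → ℝ) : ℕ → ℕ → ℝ
  | 0 => τ
  | ℓ + 1 => dyadicOnce (levelK k ℓ) (levelτ k τ ℓ)

/-- Pullback of the interior basis functions: `N_i^{p,r}(ξ₁) N_j^{p,r}(ξ₂)`. -/
def fOmega (p r k : ℕ) (τ : ℕ → ℝ) (i j : ℕ) (q : ℝ × ℝ) : ℝ :=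
  Bspl p (p - r) k τ i q.1 * Bspl p (p - r) k τ j q.2

/-- Pullback of the interface basis function `φ_{Γ₀,i}` on the patch with
gluing datum `βS`. -/
def fGamma0 (p r k : ℕ) (τ : ℕ → ℝ) (βS : ℝ → ℝ) (i : ℕ) (q : ℝ × ℝ) : ℝ :=
  Bspl p (p - r - 1) k τ i q.2 *
      (Bspl p (p - r) k τ 0 q.1 + Bspl p (p - r) k τ 1 q.1) +
    βS q.2 * d01 (Bspl p (p - r - 1) k τ i) q.2 * (τ 0 / (p : ℝ)) * Bspl p (p - r) k τ 1 q.1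

/-- Pullback of the interface basis function `φ_{Γ₁,i}` on the patch with
gluing datum `αS`. -/
def fGamma1 (p r k : ℕ) (τ : ℕ → ℝ) (αS : ℝ → ℝ) (i : ℕ) (q : ℝ × ℝ) : ℝ :=
  αS q.2 * Bspl (p - 1) (p - r - 1) k τ i q.2 * Bspl p (p - r) k τ 1 q.1

/-- Support of a function on the domain `Ω`. -/
def suppOn (Ω : Set (ℝ × ℝ)) (φ : ℝ × ℝ → ℝ) : Set (ℝ × ℝ) :=
  closure {x | x ∈ Ω ∧ φ x ≠ 0}

/-- An analysis-suitable `G¹` two-patch geometry, on the spline space of degree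
`p`, regularity `r`, with `k` inner breakpoints `τ 0 < … < τ (k-1)`.  The two
geometry mappings `FL` and `FR` are regular spline parameterizations of the two
patches, and `αL, αR, βL, βR` are the linear gluing data. -/
structure ASG1 where
  p : ℕ
  r : ℕ
  k : ℕ
  τ : ℕ → ℝ
  hp : 3 ≤ p
  hr : 1 ≤ r
  hrp : r ≤ p - 2
  hτpos : ∀ i < k, 0 < τ i
  hτlt : ∀ i < k, τ i < 1
  hτmono : ∀ i, i + 1 < k → τ i < τ (i + 1)
  /-- left geometry mapping -/
  FL : ℝ × ℝ → ℝ × ℝ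
  /-- right geometry mapping -/
  FR : ℝ × ℝ → ℝ × ℝ
  hFL1 : (fun q => (FL q).1) ∈ tensorSpace p (p - r) k τ
  hFL2 : (fun q => (FL q).2) ∈ tensorSpace p (p - r) k τ
  hFR1 : (fun q => (FR q).1) ∈ tensorSpace p (p - r) k τ
  hFR2 : (fun q => (FR q).2) ∈ tensorSpace p (p - r) k τ
  hFLc1 : ContDiffOn ℝ 1 FL sq
  hFRc1 : ContDiffOn ℝ 1 FR sq
  hFLinj : Set.InjOn FL sq
  hFRinj : Set.InjOn FR sq
  hFLjac : ∀ q ∈ sq, jacDet FL q ≠ 0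
  hFRjac : ∀ q ∈ sq, jacDet FR q ≠ 0
  /-- the two patches share the interface `ξ₁ = 0` -/
  hIface : ∀ ξ ∈ I01, FL (0, ξ) = FR (0, ξ)
  /-- the patches intersect exactly in the common interface -/
  hGamma : FL '' sq ∩ FR '' sq = (fun ξ : ℝ => FL (0, ξ)) '' I01
  /-- gluing data -/
  αL : ℝ → ℝ
  αR : ℝ → ℝ
  βL : ℝ → ℝ
  βR : ℝ → ℝ
  hαLlin : IsLinearPoly αL
  hαRlin : IsLinearPoly αR
  hβLlin : IsLinearPoly βL
  hβRlin : IsLinearPoly βR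
  hαneg : ∀ ξ ∈ I01, αL ξ * αR ξ < 0
  /-- the analysis-suitable `G¹` condition -/
  hG1 : ∀ ξ ∈ I01,
      αR ξ • pd1v FL (0, ξ) - αL ξ • pd1v FR (0, ξ) +
          (αL ξ * βR ξ - αR ξ * βL ξ) • pd2v FL (0, ξ) = 0

/-- The function `β = α^(L) β^(R) − α^(R) β^(L)`. -/
def ASG1.beta (G : ASG1) : ℝ → ℝ := fun ξ => G.αL ξ * G.βR ξ - G.αR ξ * G.βL ξ

/-- The left patch `Ω^(L)`. -/
def ASG1.ΩL (G : ASG1) : Set (ℝ × ℝ) := G.FL '' sq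

/-- The right patch `Ω^(R)`. -/
def ASG1.ΩR (G : ASG1) : Set (ℝ × ℝ) := G.FR '' sq

/-- The two-patch domain `Ω = Ω^(L) ∪ Ω^(R)`. -/
def ASG1.dom (G : ASG1) : Set (ℝ × ℝ) := G.ΩL ∪ G.ΩR

/-- The interface `Γ`. -/
def ASG1.iface (G : ASG1) : Set (ℝ × ℝ) := (fun ξ : ℝ => G.FL (0, ξ)) '' I01

-- The function on `Ω` whose pullbacks to the two patches are `fL` and `fR`
-- (extended by `0` outside `Ω`).
open Classical in
def ASG1.glue (G : ASG1) (fL fR : ℝ × ℝ → ℝ) (x : ℝ × ℝ) : ℝ :=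
  if x ∈ G.ΩL then fL (Function.invFunOn G.FL sq x)
  else if x ∈ G.ΩR then fR (Function.invFunOn G.FR sq x)
  else 0

/-- Indices for the basis `Φ` of the `C¹` space `W`. -/
inductive PhiIdx where
  | inL (i j : ℕ) : PhiIdx
  | inR (i j : ℕ) : PhiIdx
  | g0 (i : ℕ) : PhiIdx
  | g1 (i : ℕ) : PhiIdx

/-- The valid index ranges for the basis `Φ` (for degree `p`, regularity `r`,
`k` inner breakpoints). -/
def PhiIdx.valid (p r k : ℕ) : PhiIdx → Prop
  | .inL i j => 2 ≤ i ∧ i < sdim p (p - r) k ∧ j < sdim p (p - r) k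
  | .inR i j => 2 ≤ i ∧ i < sdim p (p - r) k ∧ j < sdim p (p - r) k
  | .g0 i => i < sdim p (p - r - 1) k
  | .g1 i => i < sdim (p - 1) (p - r - 1) k

/-- The basis functions of the `C¹` space `W`, for breakpoints `τ' 0 < … < τ' (k'-1)`. -/
def ASG1.phiAt (G : ASG1) (k' : ℕ) (τ' : ℕ → ℝ) : PhiIdx → ℝ × ℝ → ℝ
  | .inL i j => G.glue (fOmega G.p G.r k' τ' i j) (fun _ => 0)
  | .inR i j => G.glue (fun _ => 0) (fOmega G.p G.r k' τ' i j)
  | .g0 i => G.glue (fGamma0 G.p G.r k' τ' G.βL i) (fGamma0 G.p G.r k' τ' G.βR i)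
  | .g1 i => G.glue (fGamma1 G.p G.r k' τ' G.αL i) (fGamma1 G.p G.r k' τ' G.αR i)

/-- The level-`ℓ` basis functions. -/
def ASG1.phiLvl (G : ASG1) (ℓ : ℕ) : PhiIdx → ℝ × ℝ → ℝ :=
  G.phiAt (levelK G.k ℓ) (levelτ G.k G.τ ℓ)

/-- The level-`ℓ` basis `Φ^ℓ`, as a set of functions on the two-patch domain. -/
def ASG1.PhiSetLvl (G : ASG1) (ℓ : ℕ) : Set (ℝ × ℝ → ℝ) :=
  G.phiLvl ℓ '' {e | e.valid G.p G.r (levelK G.k ℓ)}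

/-- The basis `Φ` (level `0`). -/
def ASG1.PhiSet (G : ASG1) : Set (ℝ × ℝ → ℝ) := G.PhiSetLvl 0

section Knots

variable {dg m k : ℕ} {τ : ℕ → ℝ}

lemma extBpt_lt_succ (hτpos : ∀ i < k, 0 < τ i) (hτlt : ∀ i < k, τ i < 1)
    (hτmono : ∀ i, i + 1 < k → τ i < τ (i + 1)) {q : ℕ} (hq : q ≤ k) :
    extBpt k τ q < extBpt k τ (q + 1) := by
  unfold extBpt
  rcases Nat.eq_zero_or_pos q with rfl | hq0
  · by_cases hk : 1 ≤ k
    · simpa [hk] using hτpos 0 hk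
    · simp [hk]
  rcases Nat.lt_or_ge q k with hqk | hqk
  · have h := hτmono (q - 1) (by omega)
    rw [Nat.sub_add_cancel hq0] at h
    simpa [hq0.ne', hq, hqk] using h
  · obtain rfl : q = k := by omega
    simpa [hq0.ne'] using hτlt (q - 1) (by omega)

variable (hτ : ∀ q ≤ k, extBpt k τ q < extBpt k τ (q + 1))
include hτ

lemma extBpt_monotone : Monotone (extBpt k τ) := by
  refine monotone_nat_of_le_succ fun q => ?_
  rcases le_or_gt q k with hq | hq
  · exact (hτ q hq).le
  · simp [extBpt, show q ≠ 0 by omega, show ¬ q ≤ k by omega, show ¬ q + 1 ≤ k by omega]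

lemma extBpt_le_one (q : ℕ) : extBpt k τ q ≤ 1 := by
  calc extBpt k τ q ≤ extBpt k τ (q + k + 1) := extBpt_monotone hτ (by omega)
    _ = 1 := by rw [extBpt, if_neg (by omega), if_neg (by omega)]

omit hτ in
/-- The knot `j` is the breakpoint with index `⌈(j - dg) / m⌉`. -/
lemma openKnots_eq_extBpt (hm : 0 < m) (j : ℕ) :
    openKnots dg m k τ j = extBpt k τ ((j - dg + m - 1) / m) := by
  unfold openKnots extBpt
  rcases le_or_gt j dg with hj | hj
  · simp [hj]
  have hq : (j - dg + m - 1) / m = (j - (dg + 1)) / m + 1 := by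
    rw [show j - dg + m - 1 = j - (dg + 1) + m by omega, Nat.add_div_right _ hm]
  rw [if_neg hj.not_ge, hq, if_neg (Nat.succ_ne_zero _)]
  by_cases hjk : dg + k * m < j
  · have : k ≤ (j - (dg + 1)) / m := (Nat.le_div_iff_mul_le hm).2 (by omega)
    rw [if_pos hjk, if_neg (by omega)]
  · have : (j - (dg + 1)) / m < k := (Nat.div_lt_iff_lt_mul hm).2 (by omega)
    rw [if_neg hjk, if_pos (by omega), Nat.add_sub_cancel]

lemma openKnots_monotone (hm : 0 < m) : Monotone (openKnots dg m k τ) := by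
  intro i j hij
  rw [openKnots_eq_extBpt hm, openKnots_eq_extBpt hm]
  exact extBpt_monotone hτ (Nat.div_le_div_right (by omega))

lemma openKnots_le_one (hm : 0 < m) (j : ℕ) : openKnots dg m k τ j ≤ 1 := by
  rw [openKnots_eq_extBpt hm]
  exact extBpt_le_one hτ _

/-- Each `N_i` has a nonempty knot span `(t j, t (j + 1))` among the `dg + 1` spans of its
support. -/
lemma exists_openKnots_lt_succ (hm : 0 < m) (hmd : m ≤ dg + 1) {i : ℕ} (hi : i < sdim dg m k) :
    ∃ j, i ≤ j ∧ j ≤ i + dg ∧ dg ≤ j ∧ j < sdim dg m k ∧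
      openKnots dg m k τ j < openKnots dg m k τ (j + 1) := by
  have hlow := Nat.lt_div_mul_add (a := i - dg + m - 1) hm
  have hup := Nat.div_mul_le_self (i - dg + m - 1) m
  set q := (i - dg + m - 1) / m
  have hsmall : dg < i ∨ q * m = 0 := by
    rcases lt_or_ge dg i with h | h
    · exact .inl h
    · simp [q, Nat.div_eq_of_lt (show i - dg + m - 1 < m by omega)]
  have hqk : q ≤ k := Nat.lt_succ_iff.1 <| (Nat.div_lt_iff_lt_mul hm).2 (by
    simp only [sdim] at hi; rw [Nat.succ_mul]; omega)
  have hqm : q * m ≤ k * m := Nat.mul_le_mul_right m hqk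
  refine ⟨dg + q * m, by omega, by omega, by omega, by simp only [sdim]; omega, ?_⟩
  rw [openKnots_eq_extBpt hm, openKnots_eq_extBpt hm,
    show dg + q * m - dg + m - 1 = m - 1 + q * m by omega,
    show dg + q * m + 1 - dg + m - 1 = m + q * m by omega,
    Nat.add_mul_div_right _ _ hm, Nat.add_mul_div_right _ _ hm,
    Nat.div_eq_of_lt (by omega), Nat.div_self hm, zero_add, add_comm 1]
  exact hτ q hqk

end Knots

section LinearAlgebra

theorem linearIndependent_of_span_le_of_card_le {K V ι κ : Type*} [Field K] [AddCommGroup V]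
    [Module K V] [Fintype ι] [Fintype κ] {f : ι → V} {g : κ → V} (hg : LinearIndependent K g)
    (hspan : Submodule.span K (range g) ≤ Submodule.span K (range f))
    (hcard : Fintype.card ι ≤ Fintype.card κ) : LinearIndependent K f := by
  have := FiniteDimensional.span_of_finite K (Set.finite_range f)
  rw [linearIndependent_iff_card_eq_finrank_span]
  refine le_antisymm ?_ (finrank_range_le_card f)
  calc Fintype.card ι ≤ Fintype.card κ := hcard
    _ = Module.finrank K (Submodule.span K (range g)) := (finrank_span_eq_card hg).symm
    _ ≤ Set.finrank K (range f) := Submodule.finrank_mono hspan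

open Polynomial in
/-- Comparing coefficients of `∑ c s (X - v s) ^ d = 0` gives a Vandermonde system for `c`. -/
theorem linearIndependent_pow_sub {S : Set ℝ} (hS : S.Infinite) {d : ℕ} {v : Fin (d + 1) → ℝ}
    (hv : Function.Injective v) :
    LinearIndependent ℝ (fun s => S.domRestrict (fun x => (x - v s) ^ d)) := by
  rw [Fintype.linearIndependent_iff]
  intro c hc
  set P : ℝ[X] := ∑ s, C (c s) * (X + C (-v s)) ^ d
  have hP : P = 0 := by
    refine eq_zero_of_infinite_isRoot P (hS.mono fun x hx => ?_)
    have := congrFun hc ⟨x, hx⟩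
    simpa [P, eval_finsetSum, sub_eq_add_neg] using this
  have hmoments : (Matrix.vandermonde fun s => -v s).transpose.mulVec c = 0 := by
    funext e
    have hcoeff := congrArg (coeff · (d - e)) hP
    have hchoose : (d.choose (d - e) : ℝ) ≠ 0 := by
      exact_mod_cast (Nat.choose_pos (Nat.sub_le d e)).ne'
    simp only [P, finsetSum_coeff, coeff_C_mul, coeff_X_add_C_pow,
      Nat.sub_sub_self (Fin.is_le e), coeff_zero] at hcoeff
    simp only [Matrix.mulVec, dotProduct, Matrix.transpose_apply, Matrix.vandermonde_apply,
      Pi.zero_apply]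
    simp_rw [← mul_assoc, ← Finset.sum_mul, mul_eq_zero, hchoose, or_false] at hcoeff
    simpa [mul_comm] using hcoeff
  have hdet : (Matrix.vandermonde fun s => -v s).transpose.det ≠ 0 := by
    rw [Matrix.det_transpose, Matrix.det_vandermonde_ne_zero_iff]
    exact neg_injective.comp hv
  exact congrFun (Matrix.eq_zero_of_mulVec_eq_zero hdet hmoments)

end LinearAlgebra

section CoxDeBoor

variable {t : ℕ → ℝ} {x : ℝ}

def cdbWeight (t : ℕ → ℝ) (d i : ℕ) (x : ℝ) : ℝ :=
  if t (i + d + 1) = t i then 0 else (x - t i) / (t (i + d + 1) - t i)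

lemma coxDeBoor_eq_zero_of_lt_knot (ht : Monotone t) (ht1 : ∀ j, t j ≤ 1) :
    ∀ d i, x < t i → coxDeBoor t d i x = 0
  | 0, i, hx => by
    have := ht1 i
    rw [coxDeBoor, if_neg (by rintro (⟨h, -⟩ | ⟨-, -, rfl⟩) <;> linarith)]
  | d + 1, i, hx => by
    rw [coxDeBoor, coxDeBoor_eq_zero_of_lt_knot ht ht1 d i hx,
      coxDeBoor_eq_zero_of_lt_knot ht ht1 d (i + 1) (hx.trans_le (ht (Nat.le_succ i)))]
    ring

lemma coxDeBoor_eq_zero_of_knot_le (ht : Monotone t) (hx1 : x < 1) :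
    ∀ d i, t (i + d + 1) ≤ x → coxDeBoor t d i x = 0
  | 0, i, hx => by
    rw [coxDeBoor, if_neg (by rintro (⟨-, h⟩ | ⟨-, -, rfl⟩) <;> linarith)]
  | d + 1, i, hx => by
    rw [coxDeBoor, coxDeBoor_eq_zero_of_knot_le ht hx1 d i ((ht (by omega)).trans hx),
      coxDeBoor_eq_zero_of_knot_le ht hx1 d (i + 1)
        (by rwa [show i + 1 + d + 1 = i + (d + 1) + 1 by omega])]
    ring

lemma coxDeBoor_eq_zero_of_knot_eq (ht : Monotone t) (ht1 : ∀ j, t j ≤ 1) (hx1 : x < 1) {d i : ℕ}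
    (h : t (i + d + 1) = t i) : coxDeBoor t d i x = 0 := by
  rcases lt_or_ge x (t i) with hx | hx
  · exact coxDeBoor_eq_zero_of_lt_knot ht ht1 d i hx
  · exact coxDeBoor_eq_zero_of_knot_le ht hx1 d i (h ▸ hx)

lemma coxDeBoor_succ_of_lt_one (ht : Monotone t) (ht1 : ∀ j, t j ≤ 1) (hx1 : x < 1) (d i : ℕ) :
    coxDeBoor t (d + 1) i x = cdbWeight t d i x * coxDeBoor t d i x +
      (1 - cdbWeight t d (i + 1) x) * coxDeBoor t d (i + 1) x := by
  rw [coxDeBoor, cdbWeight, cdbWeight, show i + 1 + d + 1 = i + d + 2 by omega]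
  by_cases h : t (i + d + 2) = t (i + 1)
  · rw [coxDeBoor_eq_zero_of_knot_eq ht ht1 hx1 (i := i + 1) (d := d)
      (by rwa [show i + 1 + d + 1 = i + d + 2 by omega])]
    ring
  · rw [if_neg h, if_neg h]
    field_simp [sub_ne_zero.2 h]
    ring

def marsdenDual (t : ℕ → ℝ) (i d : ℕ) (y : ℝ) : ℝ := ∏ l ∈ Finset.range d, (t (i + l + 1) - y)

lemma marsdenDual_succ (i d : ℕ) (y : ℝ) :
    marsdenDual t i (d + 1) y = marsdenDual t i d y * (t (i + d + 1) - y) :=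
  Finset.prod_range_succ _ _

lemma marsdenDual_succ' (i d : ℕ) (y : ℝ) :
    marsdenDual t i (d + 1) y = (t (i + 1) - y) * marsdenDual t (i + 1) d y := by
  simp only [marsdenDual, Finset.prod_range_succ', add_zero, mul_comm]
  congr 1
  exact Finset.prod_congr rfl fun l _ => by rw [show i + (l + 1) + 1 = i + 1 + l + 1 by omega]

lemma sum_coxDeBoor_eq_sum_active (ht : Monotone t) (ht1 : ∀ j, t j ≤ 1) (c : ℕ → ℝ)
    {d j n : ℕ} (hjd : d ≤ j) (hjn : j < n) (hx : x ∈ Ioo (t j) (t (j + 1))) :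
    ∑ i ∈ Finset.range n, c i * coxDeBoor t d i x =
      ∑ l : Fin (d + 1), c (j - d + l) * coxDeBoor t d (j - d + l) x := by
  have hx1 : x < 1 := hx.2.trans_le (ht1 _)
  rw [Fin.sum_univ_eq_sum_range (fun l => c (j - d + l) * coxDeBoor t d (j - d + l) x),
    show d + 1 = j + 1 - (j - d) by omega,
    ← Finset.sum_Ico_eq_sum_range (fun i => c i * coxDeBoor t d i x)]
  refine (Finset.sum_subset (fun i hi => ?_) fun i _ hi => ?_).symm
  · simp only [Finset.mem_Ico, Finset.mem_range] at hi ⊢; omega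
  · simp only [Finset.mem_Ico, not_and_or, not_le, not_lt] at hi
    rw [mul_eq_zero]; right
    rcases hi with hi | hi
    · exact coxDeBoor_eq_zero_of_knot_le ht hx1 d i ((ht (by omega)).trans hx.1.le)
    · exact coxDeBoor_eq_zero_of_lt_knot ht ht1 d i (hx.2.trans_le (ht hi))

/-- Marsden's identity. -/
theorem sum_marsdenDual_mul_coxDeBoor (ht : Monotone t) (ht1 : ∀ j, t j ≤ 1) {j : ℕ}
    (hx : x ∈ Ioo (t j) (t (j + 1))) (y : ℝ) :
    ∀ d ≤ j, ∑ i ∈ Finset.range (j + 1), marsdenDual t i d y * coxDeBoor t d i x = (x - y) ^ d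
  | 0, _ => by
    rw [sum_coxDeBoor_eq_sum_active ht ht1 _ (Nat.zero_le j) (Nat.lt_succ_self j) hx]
    simp [marsdenDual, coxDeBoor, hx.1.le, hx.2]
  | d + 1, hd => by
    have hx1 : x < 1 := hx.2.trans_le (ht1 _)
    set N := coxDeBoor t d
    set ω := cdbWeight t d
    set f := fun i => (t (i + d + 1) - y) * ω i x * (marsdenDual t i d y * N i x)
    set g := fun i => (t i - y) * (1 - ω i x) * (marsdenDual t i d y * N i x)
    have hsplit : ∀ i, marsdenDual t i (d + 1) y * coxDeBoor t (d + 1) i x = f i + g (i + 1) := by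
      intro i
      rw [coxDeBoor_succ_of_lt_one ht ht1 hx1]
      linear_combination (ω i x * N i x) * marsdenDual_succ i d y +
        ((1 - ω (i + 1) x) * N (i + 1) x) * marsdenDual_succ' i d y
    -- `N_{0,d}` and `N_{j+1,d}` vanish on the span, so the shifted sum telescopes.
    have hshift : ∑ i ∈ Finset.range (j + 1), g (i + 1) = ∑ i ∈ Finset.range (j + 1), g i := by
      have h0 : g 0 = 0 := by
        simp [g, N, coxDeBoor_eq_zero_of_knot_le ht hx1 d 0 ((ht (by omega)).trans hx.1.le)]
      have hj : g (j + 1) = 0 := by simp [g, N, coxDeBoor_eq_zero_of_lt_knot ht ht1 d _ hx.2]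
      have := (Finset.sum_range_succ' g (j + 1)).symm.trans (Finset.sum_range_succ g (j + 1))
      rwa [h0, hj, add_zero, add_zero] at this
    have hterm : ∀ i, f i + g i = (x - y) * (marsdenDual t i d y * N i x) := by
      intro i
      by_cases h : t (i + d + 1) = t i
      · simp [f, g, N, coxDeBoor_eq_zero_of_knot_eq ht ht1 hx1 h]
      · simp only [f, g, ω, cdbWeight, if_neg h]
        field_simp [sub_ne_zero.2 h]
        ring
    calc ∑ i ∈ Finset.range (j + 1), marsdenDual t i (d + 1) y * coxDeBoor t (d + 1) i x
        = ∑ i ∈ Finset.range (j + 1), (f i + g i) := by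
          rw [Finset.sum_congr rfl fun i _ => hsplit i, Finset.sum_add_distrib, hshift,
            ← Finset.sum_add_distrib]
      _ = (x - y) ^ (d + 1) := by
          simp_rw [hterm, ← Finset.mul_sum]
          rw [sum_marsdenDual_mul_coxDeBoor ht ht1 hx y d (by omega), pow_succ']

/-- By Marsden's identity the `d + 1` active B-splines span the `d + 1` independent polynomials
`(x - s) ^ d`. -/
theorem linearIndependent_coxDeBoor_active (ht : Monotone t) (ht1 : ∀ j, t j ≤ 1) {d j : ℕ}
    (hjd : d ≤ j) (hj : t j < t (j + 1)) :
    LinearIndependent ℝ (fun l : Fin (d + 1) =>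
      (Ioo (t j) (t (j + 1))).domRestrict (coxDeBoor t d (j - d + l))) := by
  refine linearIndependent_of_span_le_of_card_le (linearIndependent_pow_sub (Ioo_infinite hj)
    (v := fun s : Fin (d + 1) => (s : ℝ)) (Nat.cast_injective.comp Fin.val_injective)) ?_ le_rfl
  rw [Submodule.span_le]
  rintro _ ⟨s, rfl⟩
  have hpow : (Ioo (t j) (t (j + 1))).domRestrict (fun x => (x - s) ^ d) =
      ∑ l : Fin (d + 1), marsdenDual t (j - d + l) d s •
        (Ioo (t j) (t (j + 1))).domRestrict (coxDeBoor t d (j - d + l)) := by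
    funext ⟨x, hx⟩
    simp only [Set.domRestrict_apply, Finset.sum_apply, Pi.smul_apply, smul_eq_mul]
    rw [← sum_marsdenDual_mul_coxDeBoor ht ht1 hx s d hjd,
      sum_coxDeBoor_eq_sum_active ht ht1 _ hjd (Nat.lt_succ_self j) hx]
  simp only [hpow]
  exact Submodule.sum_mem _ fun l _ => Submodule.smul_mem _ _ (Submodule.subset_span ⟨l, rfl⟩)

end CoxDeBoor

theorem coeff_eq_zero_of_sum_mul_Bspl_eq_zero {dg m k : ℕ} {τ : ℕ → ℝ}
    (hτ : ∀ q ≤ k, extBpt k τ q < extBpt k τ (q + 1)) (hm : 0 < m) (hmd : m ≤ dg + 1)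
    {c : ℕ → ℝ}
    (h : ∀ x ∈ Ioo (0 : ℝ) 1, ∑ i ∈ Finset.range (sdim dg m k), c i * Bspl dg m k τ i x = 0) :
    ∀ i < sdim dg m k, c i = 0 := by
  intro i hi
  set t := openKnots dg m k τ
  have ht : Monotone t := openKnots_monotone hτ hm
  have ht1 : ∀ j, t j ≤ 1 := openKnots_le_one hτ hm
  have ht0 : ∀ j, 0 ≤ t j := fun j => (by simp [t, openKnots] : t 0 = 0) ▸ ht (Nat.zero_le j)
  obtain ⟨j, hij, hji, hdj, hjn, hj⟩ := exists_openKnots_lt_succ hτ hm hmd hi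
  have hloc := Fintype.linearIndependent_iff.1 (linearIndependent_coxDeBoor_active ht ht1 hdj hj)
    (fun l => c (j - dg + l)) (by
      funext ⟨x, hx⟩
      have := h x ⟨(ht0 j).trans_lt hx.1, hx.2.trans_le (ht1 _)⟩
      simp only [Bspl] at this
      rw [sum_coxDeBoor_eq_sum_active ht ht1 c hdj hjn hx] at this
      simpa using this) ⟨i - (j - dg), by omega⟩
  simpa [show j - dg + (i - (j - dg)) = i by omega] using hloc

section Coefficients

variable {ι α : Type*} [DecidableEq α]

def coeffAt (s : Finset ι) (g : ι → ℝ) (idx : ι → α) (a : α) : ℝ :=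
  ∑ e ∈ s, if idx e = a then g e else 0

lemma coeffAt_apply_of_injOn {s : Finset ι} (g : ι → ℝ) {idx : ι → α} (hidx : Set.InjOn idx s)
    {e : ι} (he : e ∈ s) : coeffAt s g idx (idx e) = g e := by
  rw [coeffAt, Finset.sum_eq_single e (fun e' he' hne => if_neg fun h => hne (hidx he' he h))
    (fun h => absurd he h), if_pos rfl]

lemma sum_mul_sum_boole_mul (s : Finset ι) (g : ι → ℝ) (idx : ι → α) {κ : Type*} (t : Finset κ)
    (emb : κ → α) (F : κ → ℝ) :
    ∑ e ∈ s, g e * ∑ j ∈ t, (if idx e = emb j then 1 else 0) * F j =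
      ∑ j ∈ t, coeffAt s g idx (emb j) * F j := by
  simp only [coeffAt, Finset.mul_sum, Finset.sum_mul]
  rw [Finset.sum_comm]
  refine Finset.sum_congr rfl fun j _ => Finset.sum_congr rfl fun e _ => ?_
  split_ifs <;> ring

end Coefficients

instance : DecidableEq PhiIdx := Classical.decEq _

def PhiIdx.swap : PhiIdx → PhiIdx
  | .inL i j => .inR i j
  | .inR i j => .inL i j
  | .g0 i => .g0 i
  | .g1 i => .g1 i

lemma PhiIdx.swap_swap (e : PhiIdx) : e.swap.swap = e := by cases e <;> rfl

lemma PhiIdx.valid_swap {p r k : ℕ} {e : PhiIdx} : e.swap.valid p r k ↔ e.valid p r k := by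
  cases e <;> rfl

section Pullback

variable {p r k : ℕ} {τ : ℕ → ℝ} {α β : ℝ → ℝ}

/-- The pullback of `φ_e` to the patch with gluing data `α, β`, indexed as if its interior functions
were the `inL` ones: the right patch sees `e.swap`. -/
def pullback (p r k : ℕ) (τ : ℕ → ℝ) (α β : ℝ → ℝ) : PhiIdx → ℝ × ℝ → ℝ
  | .inL i j => fOmega p r k τ i j
  | .inR _ _ => fun _ => 0
  | .g0 i => fGamma0 p r k τ β i
  | .g1 i => fGamma1 p r k τ α i

/-- The coefficient of `N_i^{p,r}(ξ₁)` in `pullback p r k τ α β e (ξ₁, ξ₂)`. -/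
def pullbackCoeff (p r k : ℕ) (τ : ℕ → ℝ) (α β : ℝ → ℝ) : PhiIdx → ℕ → ℝ → ℝ
  | .inL i' j, i, y => if i = i' then Bspl p (p - r) k τ j y else 0
  | .inR _ _, _, _ => 0
  | .g0 i0, i, y => (if i = 0 then Bspl p (p - r - 1) k τ i0 y else 0) +
      if i = 1 then
        Bspl p (p - r - 1) k τ i0 y + β y * d01 (Bspl p (p - r - 1) k τ i0) y * (τ 0 / p)
      else 0
  | .g1 i1, i, y => if i = 1 then α y * Bspl (p - 1) (p - r - 1) k τ i1 y else 0

lemma pullback_eq_sum (hp : 1 ≤ p) {e : PhiIdx} (he : e.valid p r k) (x y : ℝ) :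
    pullback p r k τ α β e (x, y) = ∑ i ∈ Finset.range (sdim p (p - r) k),
      pullbackCoeff p r k τ α β e i y * Bspl p (p - r) k τ i x := by
  have h1 : 1 < sdim p (p - r) k := by simp only [sdim]; omega
  cases e with
  | inL i j => simp [pullback, pullbackCoeff, fOmega, ite_mul, he.2.1, mul_comm]
  | inR => simp [pullback, pullbackCoeff]
  | g0 i =>
    simp [pullback, pullbackCoeff, fGamma0, ite_mul, add_mul, Finset.sum_add_distrib, h1,
      Nat.zero_lt_of_lt h1]
    ring
  | g1 i => simp [pullback, pullbackCoeff, fGamma1, ite_mul, h1]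

lemma pullbackCoeff_of_two_le {e : PhiIdx} (he : e.valid p r k) {i : ℕ} (hi : 2 ≤ i) (y : ℝ) :
    pullbackCoeff p r k τ α β e i y = ∑ j ∈ Finset.range (sdim p (p - r) k),
      (if e = .inL i j then 1 else 0) * Bspl p (p - r) k τ j y := by
  cases e with
  | inL i' j => simp [pullbackCoeff, ite_and, he.2.2, eq_comm (a := i)]
  | inR => simp [pullbackCoeff]
  | g0 => simp [pullbackCoeff, show i ≠ 0 by omega, show i ≠ 1 by omega]
  | g1 => simp [pullbackCoeff, show i ≠ 1 by omega]

lemma pullbackCoeff_zero {e : PhiIdx} (he : e.valid p r k) (y : ℝ) :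
    pullbackCoeff p r k τ α β e 0 y = ∑ i0 ∈ Finset.range (sdim p (p - r - 1) k),
      (if e = .g0 i0 then 1 else 0) * Bspl p (p - r - 1) k τ i0 y := by
  cases e with
  | inL i' j => simp [pullbackCoeff, show 0 ≠ i' by have := he.1; omega]
  | inR => simp [pullbackCoeff]
  | g0 i0 => simp [pullbackCoeff, eq_comm, not_le.2 (he : i0 < sdim p (p - r - 1) k)]
  | g1 => simp [pullbackCoeff]

lemma pullbackCoeff_one {e : PhiIdx} (he : e.valid p r k) (y : ℝ) :
    pullbackCoeff p r k τ α β e 1 y =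
      ∑ i0 ∈ Finset.range (sdim p (p - r - 1) k), (if e = .g0 i0 then 1 else 0) *
        (Bspl p (p - r - 1) k τ i0 y + β y * d01 (Bspl p (p - r - 1) k τ i0) y * (τ 0 / p)) +
      α y * ∑ i1 ∈ Finset.range (sdim (p - 1) (p - r - 1) k),
        (if e = .g1 i1 then 1 else 0) * Bspl (p - 1) (p - r - 1) k τ i1 y := by
  cases e with
  | inL i' j => simp [pullbackCoeff, show 1 ≠ i' by have := he.1; omega]
  | inR => simp [pullbackCoeff]
  | g0 i0 => simp [pullbackCoeff, eq_comm, not_le.2 (he : i0 < sdim p (p - r - 1) k)]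
  | g1 i1 => simp [pullbackCoeff, eq_comm, not_le.2 (he : i1 < sdim (p - 1) (p - r - 1) k)]

end Pullback

lemma sum_mul_pullbackCoeff_eq_zero {p r k : ℕ} {τ : ℕ → ℝ} {α β : ℝ → ℝ}
    (hτ : ∀ q ≤ k, extBpt k τ q < extBpt k τ (q + 1)) (hrp : r + 2 ≤ p) {ι : Type*}
    {s : Finset ι} (g : ι → ℝ) {idx : ι → PhiIdx} (hvalid : ∀ e ∈ s, (idx e).valid p r k)
    (h : ∀ x ∈ Ioo (0 : ℝ) 1, ∀ y ∈ Ioo (0 : ℝ) 1,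
      ∑ e ∈ s, g e * pullback p r k τ α β (idx e) (x, y) = 0)
    {y : ℝ} (hy : y ∈ Ioo (0 : ℝ) 1) :
    ∀ i < sdim p (p - r) k, ∑ e ∈ s, g e * pullbackCoeff p r k τ α β (idx e) i y = 0 := by
  refine coeff_eq_zero_of_sum_mul_Bspl_eq_zero hτ (by omega) (by omega) fun x hx => ?_
  rw [← h x hx y hy, Finset.sum_congr rfl fun e he =>
    congrArg (g e * ·) (pullback_eq_sum (by omega) (hvalid e he) x y)]
  simp only [Finset.mul_sum, Finset.sum_mul, mul_assoc]
  exact Finset.sum_comm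

/-- Each coefficient `∑ₑ g e * pullbackCoeff … e i` is expanded in the B-splines of `ξ₂`; for
`i = 1` this is done after the `φ_{Γ₀}` coefficients are known to vanish, dividing by `α ≠ 0`. -/
theorem coeff_eq_zero_of_sum_pullback_eq_zero {p r k : ℕ} {τ : ℕ → ℝ} {α β : ℝ → ℝ}
    (hτ : ∀ q ≤ k, extBpt k τ q < extBpt k τ (q + 1)) (hrp : r + 2 ≤ p)
    (hα : ∀ y ∈ Ioo (0 : ℝ) 1, α y ≠ 0) {ι : Type*} {s : Finset ι} (g : ι → ℝ)
    {idx : ι → PhiIdx} (hidx : Set.InjOn idx s) (hvalid : ∀ e ∈ s, (idx e).valid p r k)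
    (h : ∀ x ∈ Ioo (0 : ℝ) 1, ∀ y ∈ Ioo (0 : ℝ) 1,
      ∑ e ∈ s, g e * pullback p r k τ α β (idx e) (x, y) = 0)
    {e : ι} (he : e ∈ s) (hR : ∀ i j, idx e ≠ .inR i j) : g e = 0 := by
  have hrow := fun y (hy : y ∈ Ioo (0 : ℝ) 1) =>
    sum_mul_pullbackCoeff_eq_zero hτ hrp g hvalid h hy
  have hinL : ∀ i, 2 ≤ i → i < sdim p (p - r) k →
      ∀ j < sdim p (p - r) k, coeffAt s g idx (.inL i j) = 0 := by
    intro i hi2 hi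
    refine coeff_eq_zero_of_sum_mul_Bspl_eq_zero hτ (by omega) (by omega) fun y hy => ?_
    rw [← sum_mul_sum_boole_mul]
    refine (Finset.sum_congr rfl fun e he => ?_).trans (hrow y hy i hi)
    rw [pullbackCoeff_of_two_le (hvalid e he) hi2]
  have hg0 : ∀ i < sdim p (p - r - 1) k, coeffAt s g idx (.g0 i) = 0 := by
    refine coeff_eq_zero_of_sum_mul_Bspl_eq_zero hτ (by omega) (by omega) fun y hy => ?_
    rw [← sum_mul_sum_boole_mul]
    refine (Finset.sum_congr rfl fun e he => ?_).trans (hrow y hy 0 (by simp only [sdim]; omega))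
    rw [pullbackCoeff_zero (hvalid e he)]
  have hg1 : ∀ i < sdim (p - 1) (p - r - 1) k, coeffAt s g idx (.g1 i) = 0 := by
    refine coeff_eq_zero_of_sum_mul_Bspl_eq_zero hτ (by omega) (by omega) fun y hy => ?_
    have hrow1 := hrow y hy 1 (by simp only [sdim]; omega)
    rw [Finset.sum_congr rfl fun e he => congrArg (g e * ·) (pullbackCoeff_one (hvalid e he) y)]
      at hrow1
    rw [Finset.sum_congr rfl fun e _ => mul_add (g e) _ _, Finset.sum_add_distrib,
      sum_mul_sum_boole_mul, Finset.sum_eq_zero fun i hi => by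
        rw [hg0 i (Finset.mem_range.1 hi), zero_mul], zero_add] at hrow1
    simp only [mul_left_comm (g _) (α y), ← Finset.mul_sum] at hrow1
    rwa [sum_mul_sum_boole_mul, mul_eq_zero, or_iff_right (hα y hy)] at hrow1
  have hv := hvalid e he
  rw [← coeffAt_apply_of_injOn g hidx he]
  rcases hie : idx e with ⟨i, j⟩ | ⟨i, j⟩ | i | i <;> rw [hie] at hv
  · exact hinL i hv.1 hv.2.1 j hv.2.2
  · exact absurd hie (hR i j)
  · exact hg0 i hv
  · exact hg1 i hv

lemma mem_sq_of_mem_Ioo {x y : ℝ} (hx : x ∈ Ioo (0 : ℝ) 1) (hy : y ∈ Ioo (0 : ℝ) 1) :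
    (x, y) ∈ sq :=
  ⟨⟨hx.1.le, hy.1.le⟩, ⟨hx.2.le, hy.2.le⟩⟩

namespace ASG1

variable (G : ASG1)

lemma phiAt_eq_glue (e : PhiIdx) :
    G.phiAt G.k G.τ e = G.glue (pullback G.p G.r G.k G.τ G.αL G.βL e)
      (pullback G.p G.r G.k G.τ G.αR G.βR e.swap) := by
  cases e <;> rfl

lemma glue_FL (fL fR : ℝ × ℝ → ℝ) {q : ℝ × ℝ} (hq : q ∈ sq) : G.glue fL fR (G.FL q) = fL q := by
  rw [glue, if_pos ⟨q, hq, rfl⟩, G.hFLinj.leftInvOn_invFunOn hq]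

/-- Off the interface `ξ₁ = 0`, the right patch does not meet the left one. -/
lemma glue_FR (fL fR : ℝ × ℝ → ℝ) {q : ℝ × ℝ} (hq : q ∈ sq) (hq1 : q.1 ≠ 0) :
    G.glue fL fR (G.FR q) = fR q := by
  have hnL : G.FR q ∉ G.ΩL := by
    intro hL
    have hmem : G.FR q ∈ G.FL '' sq ∩ G.FR '' sq := ⟨hL, q, hq, rfl⟩
    rw [G.hGamma] at hmem
    obtain ⟨ξ, hξ, hξq : G.FL (0, ξ) = G.FR q⟩ := hmem
    rw [G.hIface ξ hξ] at hξq
    have h0ξ : ((0 : ℝ), ξ) ∈ sq := ⟨⟨le_rfl, hξ.1⟩, ⟨zero_le_one, hξ.2⟩⟩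
    exact hq1 (congrArg Prod.fst (G.hFRinj h0ξ hq hξq)).symm
  rw [glue, if_neg hnL, if_pos ⟨q, hq, rfl⟩, G.hFRinj.leftInvOn_invFunOn hq]

lemma phiAt_FL (e : PhiIdx) {q : ℝ × ℝ} (hq : q ∈ sq) :
    G.phiAt G.k G.τ e (G.FL q) = pullback G.p G.r G.k G.τ G.αL G.βL e q := by
  rw [phiAt_eq_glue, glue_FL _ _ _ hq]

lemma phiAt_FR (e : PhiIdx) {q : ℝ × ℝ} (hq : q ∈ sq) (hq1 : q.1 ≠ 0) :
    G.phiAt G.k G.τ e (G.FR q) = pullback G.p G.r G.k G.τ G.αR G.βR e.swap q := by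
  rw [phiAt_eq_glue, glue_FR _ _ _ hq hq1]

/-- An index that is not a right interior one is handled on the left patch; a right interior
index is a left interior one for the swapped indexing on the right patch. -/
theorem coeff_eq_zero_of_sum_phiAt_eq_zero {s : Finset {e : PhiIdx // e.valid G.p G.r G.k}}
    (g : {e : PhiIdx // e.valid G.p G.r G.k} → ℝ)
    (hzero : ∀ z ∈ G.dom, ∑ e ∈ s, g e * G.phiAt G.k G.τ e.1 z = 0) {e} (he : e ∈ s) :
    g e = 0 := by
  have hτ : ∀ q ≤ G.k, extBpt G.k G.τ q < extBpt G.k G.τ (q + 1) :=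
    fun _ => extBpt_lt_succ G.hτpos G.hτlt G.hτmono
  have hrp : G.r + 2 ≤ G.p := by have := G.hp; have := G.hrp; omega
  have hα : ∀ y ∈ Ioo (0 : ℝ) 1, G.αL y ≠ 0 ∧ G.αR y ≠ 0 := fun y hy => by
    have := G.hαneg y ⟨hy.1.le, hy.2.le⟩
    exact ⟨left_ne_zero_of_mul this.ne, right_ne_zero_of_mul this.ne⟩
  by_cases hR : ∃ i j, e.1 = .inR i j
  · obtain ⟨i, j, hij⟩ := hR
    refine coeff_eq_zero_of_sum_pullback_eq_zero hτ hrp (fun y hy => (hα y hy).2) (β := G.βR) g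
      (idx := fun e => e.1.swap) (fun e₁ _ e₂ _ h => Subtype.ext (by
        simpa only [PhiIdx.swap_swap] using congrArg PhiIdx.swap h))
      (fun e _ => PhiIdx.valid_swap.2 e.2) (fun x hx y hy => ?_) he (by simp [hij, PhiIdx.swap])
    rw [← hzero _ (Or.inr ⟨_, mem_sq_of_mem_Ioo hx hy, rfl⟩)]
    exact Finset.sum_congr rfl fun e _ => by rw [G.phiAt_FR _ (mem_sq_of_mem_Ioo hx hy) hx.1.ne']
  · push Not at hR
    refine coeff_eq_zero_of_sum_pullback_eq_zero hτ hrp (fun y hy => (hα y hy).1) (β := G.βL) g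
      Subtype.val_injective.injOn (fun e _ => e.2) (fun x hx y hy => ?_) he hR
    rw [← hzero _ (Or.inl ⟨_, mem_sq_of_mem_Ioo hx hy, rfl⟩)]
    exact Finset.sum_congr rfl fun e _ => by rw [G.phiAt_FL _ (mem_sq_of_mem_Ioo hx hy)]

end ASG1

/-- The functions of `Φ` are linearly independent as
functions on `Ω`; hence `Φ` is a basis of the `C¹` isogeometric space
`W = span Φ`. -/
theorem phi_linearly_independent (G : ASG1) :
    LinearIndependent ℝ
      (fun e : {e : PhiIdx // e.valid G.p G.r G.k} =>
        G.dom.restrict (G.phiAt G.k G.τ e.1)) ∧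
    ∃ b : Module.Basis {e : PhiIdx // e.valid G.p G.r G.k} ℝ
        ↥(Submodule.span ℝ (Set.range (fun e : {e : PhiIdx // e.valid G.p G.r G.k} =>
            G.dom.restrict (G.phiAt G.k G.τ e.1)))),
      ∀ e : {e : PhiIdx // e.valid G.p G.r G.k},
        (b e).val = G.dom.restrict (G.phiAt G.k G.τ e.1) := by
  refine (fun hli => ⟨hli, Module.Basis.span hli,
    fun e => congrArg Subtype.val (Module.Basis.span_apply hli e)⟩) ?_
  refine linearIndependent_iff'.2 fun s g hsum e he =>
    G.coeff_eq_zero_of_sum_phiAt_eq_zero g (fun z hz => ?_) he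
  have := congrFun hsum ⟨z, hz⟩
  simp only [Finset.sum_apply, Pi.smul_apply, smul_eq_mul, Pi.zero_apply] at this
  exact this

end TwoPatch
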